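/- Let v1, v2 be linearly independent vectors in R^2 satisfying 0 ≤ ⟨v1,v2⟩ ≤ |v1|^2 ≤ |v2|^2. Then for any nonzero integers a and b, |a·v1 + b·v2| ≥ |v2 - v1|. Moreover, if equality |a·v1 + b·v2| = |v2 - v1| holds, then |a| = |b| = 1. -/
import Mathlib

open scoped RealInnerProductSpace

private lemma aux_key (A B C x y : ℝ) (hA : 0 < A) (hB : 0 < B)
    (h0 : 0 ≤ C) (h1 : C ≤ A) (h2 : A ≤ B)
    (hx2 : 1 ≤ x^2) (hy2 : 1 ≤ y^2)
    (hxy : 1 ≤ x*y ∨ x*y = -1 ∨ x*y ≤ -2) :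
    A + B - 2*C ≤ x^2 * A + 2*x*y*C + y^2 * B := by
  rcases hxy with h | h | h
  · nlinarith [mul_nonneg (sub_nonneg.mpr hx2) hA.le, mul_nonneg (sub_nonneg.mpr hy2) hB.le,
      mul_nonneg (by linarith : (0:ℝ) ≤ x*y+1) h0]
  · nlinarith [mul_nonneg (sub_nonneg.mpr hx2) hA.le, mul_nonneg (sub_nonneg.mpr hy2) hB.le]
  · nlinarith [mul_nonneg (sq_nonneg (x+y)) hA.le,
      mul_nonneg (sub_nonneg.mpr hy2) (sub_nonneg.mpr h2),
      mul_nonneg (by linarith : (0:ℝ) ≤ -2*(x*y+1)) (sub_nonneg.mpr h1)]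

private lemma aux_eq_pos (A B C x y : ℝ) (hA : 0 < A) (hB : 0 < B)
    (h0 : 0 ≤ C) (hx2 : 1 ≤ x^2) (hy2 : 1 ≤ y^2) (hxy : 1 ≤ x*y)
    (heq2 : x^2 * A + 2*x*y*C + y^2 * B = A + B - 2*C) :
    x^2 = 1 ∧ y^2 = 1 := by
  have t1 : 0 ≤ (x^2-1) * A := mul_nonneg (by linarith) hA.le
  have t2 : 0 ≤ (y^2-1) * B := mul_nonneg (by linarith) hB.le
  have t3 : 0 ≤ (2*(x*y+1)) * C := mul_nonneg (by linarith) h0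
  have hz : (x^2-1)*A + (y^2-1)*B + (2*(x*y+1))*C = 0 := by linarith [heq2]
  have e1 : (x^2-1)*A = 0 := by linarith
  have e2 : (y^2-1)*B = 0 := by linarith
  constructor
  · rcases mul_eq_zero.mp e1 with h | h
    · linarith
    · exact absurd h (ne_of_gt hA)
  · rcases mul_eq_zero.mp e2 with h | h
    · linarith
    · exact absurd h (ne_of_gt hB)

private lemma aux_eq_neg (A B C x y : ℝ) (hA : 0 < A)
    (h1 : C ≤ A) (h2 : A ≤ B) (hstrict : C * C < A * B)
    (hy2 : 1 ≤ y^2) (hxy : x*y ≤ -2)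
    (heq2 : x^2 * A + 2*x*y*C + y^2 * B = A + B - 2*C) : False := by
  have t1 : 0 ≤ (x+y)^2 * A := mul_nonneg (sq_nonneg _) hA.le
  have t2 : 0 ≤ (y^2-1) * (B-A) := mul_nonneg (by linarith) (by linarith)
  have t3 : 0 ≤ (-2*(x*y+1)) * (A-C) := mul_nonneg (by linarith) (by linarith)
  have hz : (x+y)^2 * A + (y^2-1)*(B-A) + (-2*(x*y+1))*(A-C) = 0 := by linarith [heq2]
  have e1 : (x+y)^2 * A = 0 := by linarith
  have e2 : (y^2-1)*(B-A) = 0 := by linarith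
  have e3 : (-2*(x*y+1))*(A-C) = 0 := by linarith
  have hxy0 : x + y = 0 := by
    rcases mul_eq_zero.mp e1 with h | h
    · exact pow_eq_zero_iff (n := 2) (by norm_num) |>.mp h
    · exact absurd h (ne_of_gt hA)
  have hAC : A = C := by
    rcases mul_eq_zero.mp e3 with h | h
    · linarith
    · linarith
  have hy22 : 2 ≤ y^2 := by nlinarith [hxy0, hxy]
  have hBA : B = A := by
    rcases mul_eq_zero.mp e2 with h | h
    · linarith
    · linarith
  nlinarith [hstrict, hAC, hBA]

/-- If linearly independent vectors `v₁ v₂ ∈ ℝ²` satisfy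
`0 ≤ ⟪v₁,v₂⟫ ≤ ‖v₁‖² ≤ ‖v₂‖²`, then for all nonzero integers `a, b` we have
`‖a•v₁ + b•v₂‖ ≥ ‖v₂ - v₁‖`, with equality only if `|a| = |b| = 1`. -/
theorem stmt0 (v₁ v₂ : EuclideanSpace ℝ (Fin 2))
    (hli : LinearIndependent ℝ ![v₁, v₂])
    (h0 : 0 ≤ ⟪v₁, v₂⟫) (h1 : ⟪v₁, v₂⟫ ≤ ‖v₁‖ ^ 2) (h2 : ‖v₁‖ ^ 2 ≤ ‖v₂‖ ^ 2)
    (a b : ℤ) (ha : a ≠ 0) (hb : b ≠ 0) :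
    ‖v₂ - v₁‖ ≤ ‖a • v₁ + b • v₂‖ ∧
      (‖a • v₁ + b • v₂‖ = ‖v₂ - v₁‖ → |a| = 1 ∧ |b| = 1) := by
  set A := ‖v₁‖ ^ 2 with hAdef
  set B := ‖v₂‖ ^ 2 with hBdef
  set C := ⟪v₁, v₂⟫ with hCdef
  have hv1 : v₁ ≠ 0 := by
    intro h
    have := LinearIndependent.pair_iff.mp hli 1 0 (by simp [h])
    simp at this
  have hA : 0 < A := pow_pos (norm_pos_iff.mpr hv1) 2
  have hB : 0 < B := lt_of_lt_of_le hA h2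
  have hstrict : C * C < A * B := by
    have hne : A • v₂ - C • v₁ ≠ (0 : EuclideanSpace ℝ (Fin 2)) := by
      intro h
      have h' : (-C) • v₁ + A • v₂ = 0 := by rw [← h]; module
      have := (LinearIndependent.pair_iff.mp hli (-C) A h').2
      exact absurd this (ne_of_gt hA)
    have hp : (0:ℝ) < ⟪A • v₂ - C • v₁, A • v₂ - C • v₁⟫ := by
      rw [real_inner_self_eq_norm_sq]
      exact pow_pos (norm_pos_iff.mpr hne) 2
    have e1 : ⟪v₁, v₁⟫ = A := real_inner_self_eq_norm_sq v₁
    have e2 : ⟪v₂, v₂⟫ = B := real_inner_self_eq_norm_sq v₂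
    have e3 : ⟪v₂, v₁⟫ = C := (real_inner_comm v₂ v₁).symm
    simp only [inner_sub_left, inner_sub_right, real_inner_smul_left, real_inner_smul_right,
      e1, e2, e3, hCdef] at hp
    nlinarith [hp, hA]
  have hcast1 : (a • v₁ : EuclideanSpace ℝ (Fin 2)) = ((a:ℝ)) • v₁ :=
    (Int.cast_smul_eq_zsmul ℝ a v₁).symm
  have hcast2 : (b • v₂ : EuclideanSpace ℝ (Fin 2)) = ((b:ℝ)) • v₂ :=
    (Int.cast_smul_eq_zsmul ℝ b v₂).symm
  set x : ℝ := (a:ℝ) with hx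
  set y : ℝ := (b:ℝ) with hy
  have hw : ‖a • v₁ + b • v₂‖ ^ 2 = x^2 * A + 2*x*y*C + y^2 * B := by
    rw [hcast1, hcast2, ← real_inner_self_eq_norm_sq]
    have e1 : ⟪v₁, v₁⟫ = A := real_inner_self_eq_norm_sq v₁
    have e2 : ⟪v₂, v₂⟫ = B := real_inner_self_eq_norm_sq v₂
    have e3 : ⟪v₂, v₁⟫ = C := (real_inner_comm v₂ v₁).symm
    simp only [inner_add_left, inner_add_right, real_inner_smul_left, real_inner_smul_right,
      e1, e2, e3, hCdef]
    ring
  have hd : ‖v₂ - v₁‖ ^ 2 = A + B - 2*C := by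
    rw [← real_inner_self_eq_norm_sq]
    have e1 : ⟪v₁, v₁⟫ = A := real_inner_self_eq_norm_sq v₁
    have e2 : ⟪v₂, v₂⟫ = B := real_inner_self_eq_norm_sq v₂
    have e3 : ⟪v₂, v₁⟫ = C := (real_inner_comm v₂ v₁).symm
    simp only [inner_sub_left, inner_sub_right, e1, e2, e3, hCdef]
    ring
  have hx2 : 1 ≤ x^2 := by
    have : 1 ≤ a^2 := by nlinarith [Int.one_le_abs ha, sq_abs a]
    calc (1:ℝ) ≤ ((a^2 : ℤ) : ℝ) := by exact_mod_cast this
    _ = x^2 := by push_cast [hx]; ring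
  have hy2 : 1 ≤ y^2 := by
    have : 1 ≤ b^2 := by nlinarith [Int.one_le_abs hb, sq_abs b]
    calc (1:ℝ) ≤ ((b^2 : ℤ) : ℝ) := by exact_mod_cast this
    _ = y^2 := by push_cast [hy]; ring
  have habcases : 1 ≤ a*b ∨ a*b = -1 ∨ a*b ≤ -2 := by
    have := mul_ne_zero ha hb
    omega
  have hxycast : x * y = ((a*b : ℤ):ℝ) := by push_cast; ring
  have hxy : 1 ≤ x*y ∨ x*y = -1 ∨ x*y ≤ -2 := by
    rcases habcases with h | h | h
    · left; rw [hxycast]; exact_mod_cast h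
    · right; left; rw [hxycast, h]; norm_num
    · right; right; rw [hxycast]
      calc ((a*b : ℤ):ℝ) ≤ ((-2:ℤ):ℝ) := by exact_mod_cast h
      _ = -2 := by norm_num
  have key := aux_key A B C x y hA hB h0 h1 h2 hx2 hy2 hxy
  constructor
  · have h2' : ‖v₂ - v₁‖ ^ 2 ≤ ‖a • v₁ + b • v₂‖ ^ 2 := by rw [hw, hd]; exact key
    have := Real.sqrt_le_sqrt h2'
    rwa [Real.sqrt_sq (norm_nonneg _), Real.sqrt_sq (norm_nonneg _)] at this
  · intro heq
    have heq2 : x^2 * A + 2*x*y*C + y^2 * B = A + B - 2*C := by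
      rw [← hw, ← hd, heq]
    suffices h : x^2 = 1 ∧ y^2 = 1 by
      have ha1 : a^2 = 1 := by
        have h' : ((a:ℝ))^2 = 1 := by rw [← hx]; exact h.1
        exact_mod_cast h'
      have hb1 : b^2 = 1 := by
        have h' : ((b:ℝ))^2 = 1 := by rw [← hy]; exact h.2
        exact_mod_cast h'
      have ha' : (a-1)*(a+1) = 0 := by linear_combination ha1
      have hb' : (b-1)*(b+1) = 0 := by linear_combination hb1
      have ha'' : a = 1 ∨ a = -1 := by rcases mul_eq_zero.mp ha' with h|h <;> omega
      have hb'' : b = 1 ∨ b = -1 := by rcases mul_eq_zero.mp hb' with h|h <;> omega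
      constructor
      · rcases ha'' with rfl|rfl <;> norm_num
      · rcases hb'' with rfl|rfl <;> norm_num
    rcases hxy with h | h | h
    · exact aux_eq_pos A B C x y hA hB h0 hx2 hy2 h heq2
    · have h' : x^2 * A + 2*(-1)*C + y^2 * B = A + B - 2*C := by rw [← h]; linear_combination heq2
      have t1 : 0 ≤ (x^2-1) * A := mul_nonneg (by linarith) hA.le
      have t2 : 0 ≤ (y^2-1) * B := mul_nonneg (by linarith) hB.le
      have e1 : (x^2-1)*A = 0 := by linarith
      have e2 : (y^2-1)*B = 0 := by linarith
      constructor
      · rcases mul_eq_zero.mp e1 with hh|hh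
        · linarith
        · exact absurd hh (ne_of_gt hA)
      · rcases mul_eq_zero.mp e2 with hh|hh
        · linarith
        · exact absurd hh (ne_of_gt hB)
    · exact absurd (aux_eq_neg A B C x y hA h1 h2 hstrict hy2 h heq2) (fun f => f)
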